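/- arXiv:1510.02702 — 3 statements merged into one kernel-verified Lean document; each statement's English description precedes it below -/
import Mathlib

section
/- Under assumptions A.1, A.2, A.3, for every bounded measurable f : S → ℝ and every arbitrarily small 0 < υ < 1/2 there exist a positive, almost surely finite random variable W_{f,υ} and a finite constant C, both independent of M and ε (one may take C = 2‖f‖_∞ / ∫_S h), such that almost surely, for every M ≥ 1, |(f, π^{M,ε}) − (f, π)| ≤ W_{f,υ} / M^{1/2 − υ} + C ε. -/
/-!
Compare the estimator with `(∫ f gε dμ) / (∫ gε dμ)`, `μ` the sampling law. Since `gε ≥ a⁻¹`, the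
denominator of the estimator is at least `M / a`, so the statistical error is at most
`a (|Y_M| + F |Z_M|) / M`, where `Y_M`, `Z_M` are the centred sums of `f gε (θ^(i))` and
`gε (θ^(i))`. By Hoeffding, `P(|Y_M| ≥ M^ρ) ≤ 2 exp(-c M^(2ρ-1))`, summable for `ρ = 1/2 + υ`, so
by Borel–Cantelli `sup_M |Y_M| / M^ρ` is almost surely finite and can serve in `W`. The bias is
deterministic: `|gε - g| ≤ ε` moves the numerator by at most `F ε` and the denominator by at
most `ε`, giving `2 F ε / ∫ g dμ`.
-/

open MeasureTheory ProbabilityTheory Finset Filter Real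
open scoped NNReal ENNReal

lemma summable_exp_neg_mul_rpow {κ δ : ℝ} (hκ : 0 < κ) (hδ : 0 < δ) :
    Summable fun n : ℕ => exp (-κ * (n : ℝ) ^ δ) := by
  have hdecay : (fun n : ℕ => exp (-κ * (n : ℝ) ^ δ)) =O[atTop]
      fun n : ℕ => (n : ℝ) ^ (-2 : ℝ) := by
    have h := ((isLittleO_exp_neg_mul_rpow_atTop hκ (-2 / δ)).comp_tendsto
      ((tendsto_rpow_atTop hδ).comp tendsto_natCast_atTop_atTop)).isBigO
    refine h.congr_right fun n => ?_
    simp only [Function.comp_apply]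
    rw [← rpow_mul n.cast_nonneg, mul_div_cancel₀ _ hδ.ne']
  exact summable_of_isBigO_nat (summable_nat_rpow.mpr (by norm_num)) hdecay

lemma ProbabilityTheory.HasSubgaussianMGF.mono {Ω : Type*} [MeasurableSpace Ω] {μ : Measure Ω}
    {X : Ω → ℝ} {c c' : ℝ≥0} (h : HasSubgaussianMGF X c μ) (hc : c ≤ c') :
    HasSubgaussianMGF X c' μ :=
  ⟨h.integrable_exp_mul, fun t => (h.mgf_le t).trans (by gcongr)⟩

section Hoeffding

variable {Ω : Type*} [MeasurableSpace Ω] {P : Measure Ω} [IsFiniteMeasure P] {X : ℕ → Ω → ℝ}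
  {c : ℝ≥0}

lemma measureReal_le_abs_sum_range_le (hind : iIndepFun X P)
    (hX : ∀ i, HasSubgaussianMGF (X i) c P) {ε : ℝ} (hε : 0 ≤ ε) (n : ℕ) :
    P.real {ω | ε ≤ |∑ i ∈ range n, X i ω|} ≤ 2 * exp (-ε ^ 2 / (2 * n * c)) := by
  have hneg : iIndepFun (fun i => -X i) P := hind.comp (fun _ x => -x) fun _ => measurable_neg
  have hupper := HasSubgaussianMGF.measure_sum_range_ge_le_of_iIndepFun hind
    (fun i _ => hX i) hε (n := n)
  have hlower := HasSubgaussianMGF.measure_sum_range_ge_le_of_iIndepFun hneg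
    (fun i _ => (hX i).neg) hε (n := n)
  calc P.real {ω | ε ≤ |∑ i ∈ range n, X i ω|}
      ≤ P.real ({ω | ε ≤ ∑ i ∈ range n, X i ω} ∪ {ω | ε ≤ ∑ i ∈ range n, (-X i) ω}) := by
        refine measureReal_mono fun ω hω => ?_
        simp only [Set.mem_ofPred_eq, Set.mem_union, Pi.neg_apply, sum_neg_distrib] at hω ⊢
        exact le_abs.mp hω
    _ ≤ _ := (measureReal_union_le _ _).trans (by linarith)

lemma ae_bddAbove_abs_sum_range_div_rpow (hind : iIndepFun X P)
    (hX : ∀ i, HasSubgaussianMGF (X i) c P) {ρ : ℝ} (hρ : 1 / 2 < ρ) :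
    ∀ᵐ ω ∂P, BddAbove (Set.range fun n : ℕ => |∑ i ∈ range n, X i ω| / (n : ℝ) ^ ρ) := by
  -- For `c = 0` the Hoeffding bound reads `exp (-ε ^ 2 / 0) = 1`, useless; `c + 1` also works.
  wlog hc : c ≠ 0 generalizing c
  · exact this (fun i => (hX i).mono (le_add_of_nonneg_right zero_le_one)) (by positivity)
  have hc0 : (0 : ℝ) < c := by positivity
  have htail (n : ℕ) : P.real {ω | (n : ℝ) ^ ρ ≤ |∑ i ∈ range n, X i ω|} ≤
      2 * exp (-(2 * (c : ℝ))⁻¹ * (n : ℝ) ^ (2 * ρ - 1)) := by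
    refine (measureReal_le_abs_sum_range_le hind hX (by positivity) n).trans_eq ?_
    congr 2
    rcases n.eq_zero_or_pos with rfl | hn
    · simp [zero_rpow (by linarith : 2 * ρ - 1 ≠ 0), zero_rpow (by linarith : ρ ≠ 0)]
    · have hn' : (0 : ℝ) < n := by exact_mod_cast hn
      rw [← rpow_natCast, ← rpow_mul hn'.le, rpow_sub hn', rpow_one]
      field_simp
      ring_nf
  have hsum : ∑' n : ℕ, P {ω | (n : ℝ) ^ ρ ≤ |∑ i ∈ range n, X i ω|} ≠ ∞ := by
    refine ne_top_of_le_ne_top (ENNReal.ofReal_ne_top (r := ∑' n : ℕ,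
      2 * exp (-(2 * (c : ℝ))⁻¹ * (n : ℝ) ^ (2 * ρ - 1)))) ?_
    rw [ENNReal.ofReal_tsum_of_nonneg (fun n => by positivity)
      ((summable_exp_neg_mul_rpow (by positivity) (by linarith)).mul_left 2)]
    exact ENNReal.tsum_le_tsum fun n => ENNReal.le_ofReal_iff_toReal_le (measure_ne_top _ _)
      (by positivity) |>.mpr (htail n)
  filter_upwards [ae_eventually_notMem hsum] with ω hω
  refine (isBoundedUnder_of_eventually_le (a := 1) ?_).bddAbove_range
  filter_upwards [hω, eventually_gt_atTop 0] with n hn hn0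
  have hpos : (0 : ℝ) < (n : ℝ) ^ ρ := by positivity
  simp only [not_le] at hn
  exact (div_le_one hpos).mpr hn.le

end Hoeffding

section Sampling

variable {Ω α : Type*} [MeasurableSpace α] {μ : Measure α} {θ : ℕ → Ω → α}

/-- Real `⨆` is `0` on unbounded families; this supremum is only used where it is almost surely
finite (`ae_abs_sum_sub_le_sumDeviationRate`). -/
noncomputable def sumDeviationRate (θ : ℕ → Ω → α) (μ : Measure α) (φ : α → ℝ) (ρ : ℝ)
    (ω : Ω) : ℝ :=
  ⨆ n : ℕ, |∑ i ∈ range n, φ (θ i ω) - n * ∫ x, φ x ∂μ| / (n : ℝ) ^ ρ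

lemma sumDeviationRate_nonneg (φ : α → ℝ) (ρ : ℝ) (ω : Ω) :
    0 ≤ sumDeviationRate θ μ φ ρ ω :=
  Real.iSup_nonneg fun _ => by positivity

variable [MeasurableSpace Ω] {P : Measure Ω}

lemma measurable_sumDeviationRate (hθ : ∀ i, Measurable (θ i)) {φ : α → ℝ} (hφ : Measurable φ)
    (ρ : ℝ) : Measurable (sumDeviationRate θ μ φ ρ) :=
  Measurable.iSup fun _ => ((Finset.measurable_sum _ fun i _ => hφ.comp (hθ i)).sub_const
    _).abs.div_const _

variable [IsProbabilityMeasure P]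

lemma ae_abs_sum_sub_le_sumDeviationRate (hθ : ∀ i, Measurable (θ i)) (hind : iIndepFun θ P)
    (hlaw : ∀ i, P.map (θ i) = μ) {φ : α → ℝ} (hφ : Measurable φ) {lo hi : ℝ}
    (hφb : ∀ᵐ x ∂μ, φ x ∈ Set.Icc lo hi) {ρ : ℝ} (hρ : 1 / 2 < ρ) :
    ∀ᵐ ω ∂P, ∀ n : ℕ, 0 < n →
      |∑ i ∈ range n, φ (θ i ω) - n * ∫ x, φ x ∂μ| ≤ sumDeviationRate θ μ φ ρ ω * (n : ℝ) ^ ρ := by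
  have hmean (i : ℕ) : ∫ ω, φ (θ i ω) ∂P = ∫ x, φ x ∂μ := by
    rw [← hlaw i, integral_map (hθ i).aemeasurable hφ.aestronglyMeasurable]
  have hsubG (i : ℕ) := hasSubgaussianMGF_of_mem_Icc (hφ.comp (hθ i)).aemeasurable
    (ae_of_ae_map (hθ i).aemeasurable (hlaw i ▸ hφb))
  simp only [Function.comp_apply, hmean] at hsubG
  have hind' : iIndepFun (fun i ω => φ (θ i ω) - ∫ x, φ x ∂μ) P :=
    hind.comp (fun _ x => φ x - ∫ x, φ x ∂μ) fun _ => hφ.sub_const _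
  filter_upwards [ae_bddAbove_abs_sum_range_div_rpow hind' hsubG hρ] with ω hω n hn
  have hpos : (0 : ℝ) < (n : ℝ) ^ ρ := by positivity
  rw [← div_le_iff₀ hpos]
  convert le_ciSup hω n using 1 <;> simp [sumDeviationRate, sum_sub_distrib]

end Sampling

lemma abs_div_sub_div_le {x y A B F : ℝ} (hy : 0 < y) (hB : 0 < B) (hA : |A| ≤ F * B) (m : ℝ) :
    |x / y - A / B| ≤ (|x - m * A| + F * |y - m * B|) / y := by
  have hAB : |A / B| ≤ F := by rwa [abs_div, abs_of_pos hB, div_le_iff₀ hB]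
  have hsplit : x / y - A / B = ((x - m * A) - A / B * (y - m * B)) / y := by
    field_simp
    ring
  rw [hsplit, abs_div, abs_of_pos hy]
  gcongr
  calc |x - m * A - A / B * (y - m * B)| ≤ |x - m * A| + |A / B| * |y - m * B| := by
        rw [← abs_mul]; exact abs_sub _ _
    _ ≤ |x - m * A| + F * |y - m * B| := by gcongr

lemma abs_sum_mul_div_sum_sub_div_le {M : ℕ} (hM : 0 < M) {v w : ℕ → ℝ} {a A B F RY RZ ρ : ℝ}
    (ha : 0 < a) (hw : ∀ i ∈ range M, a⁻¹ ≤ w i) (hB : 0 < B) (hA : |A| ≤ F * B) (hF : 0 ≤ F)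
    (hY : |∑ i ∈ range M, v i * w i - M * A| ≤ RY * (M : ℝ) ^ ρ)
    (hZ : |∑ i ∈ range M, w i - M * B| ≤ RZ * (M : ℝ) ^ ρ) :
    |(∑ i ∈ range M, v i * w i) / (∑ i ∈ range M, w i) - A / B| ≤
      a * (RY + F * RZ) / (M : ℝ) ^ (1 - ρ) := by
  have hM' : (0 : ℝ) < M := by exact_mod_cast hM
  have hsum : M * a⁻¹ ≤ ∑ i ∈ range M, w i := by
    simpa using card_nsmul_le_sum (range M) w a⁻¹ hw
  have hsum_pos : 0 < ∑ i ∈ range M, w i := (by positivity : (0 : ℝ) < M * a⁻¹).trans_le hsum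
  have hnum : |∑ i ∈ range M, v i * w i - M * A| + F * |∑ i ∈ range M, w i - M * B| ≤
      (RY + F * RZ) * (M : ℝ) ^ ρ := by
    nlinarith [mul_le_mul_of_nonneg_left hZ hF]
  calc _ ≤ (|∑ i ∈ range M, v i * w i - M * A| + F * |∑ i ∈ range M, w i - M * B|) /
          ∑ i ∈ range M, w i := abs_div_sub_div_le hsum_pos hB hA M
    _ ≤ (RY + F * RZ) * (M : ℝ) ^ ρ / (M * a⁻¹) :=
        div_le_div₀ ((by positivity : (0 : ℝ) ≤ _).trans hnum) hnum (by positivity) hsum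
    _ = a * (RY + F * RZ) / (M : ℝ) ^ (1 - ρ) := by
        rw [rpow_sub hM', rpow_one]
        field_simp

section Integrals

variable {α : Type*} [MeasurableSpace α] {μ : Measure α}

lemma abs_integral_mul_le_mul_integral {f w : α → ℝ} {F : ℝ} (hfb : ∀ᵐ x ∂μ, |f x| ≤ F)
    (hw : Integrable w μ) (hw0 : ∀ᵐ x ∂μ, 0 ≤ w x) :
    |∫ x, f x * w x ∂μ| ≤ F * ∫ x, w x ∂μ := by
  rw [← Real.norm_eq_abs, ← integral_const_mul F (fun x => w x)]
  refine norm_integral_le_of_norm_le (hw.const_mul F) ?_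
  filter_upwards [hfb, hw0] with x hfx hwx
  rw [Real.norm_eq_abs, abs_mul, abs_of_nonneg hwx]
  exact mul_le_mul_of_nonneg_right hfx hwx

lemma integral_pos_of_ae_le {w : α → ℝ} {c : ℝ} [IsProbabilityMeasure μ] (hc : 0 < c)
    (hw : Integrable w μ) (hcw : ∀ᵐ x ∂μ, c ≤ w x) : 0 < ∫ x, w x ∂μ :=
  hc.trans_le (by simpa using integral_mono_ae (integrable_const c) hw hcw)

lemma abs_integral_mul_div_integral_sub_le [IsProbabilityMeasure μ] {f g g' : α → ℝ} {F ε : ℝ}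
    (hf : AEStronglyMeasurable f μ) (hfb : ∀ᵐ x ∂μ, |f x| ≤ F) (hF : 0 ≤ F)
    (hg : Integrable g μ) (hg' : Integrable g' μ) (hg'0 : ∀ᵐ x ∂μ, 0 ≤ g' x)
    (hB : 0 < ∫ x, g' x ∂μ) (hI : 0 < ∫ x, g x ∂μ) (hgg' : ∀ᵐ x ∂μ, |g x - g' x| ≤ ε) :
    |(∫ x, f x * g' x ∂μ) / (∫ x, g' x ∂μ) - (∫ x, f x * g x ∂μ) / ∫ x, g x ∂μ| ≤
      2 * F / (∫ x, g x ∂μ) * ε := by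
  have hdiff_num : |∫ x, f x * g x ∂μ - ∫ x, f x * g' x ∂μ| ≤ F * ε := by
    rw [← integral_sub (hg.bdd_mul hf hfb) (hg'.bdd_mul hf hfb)]
    simpa using norm_integral_le_of_norm_le_const (μ := μ)
      (f := fun x => f x * g x - f x * g' x) (by
        filter_upwards [hfb, hgg'] with x hfx hgx
        rw [Real.norm_eq_abs, ← mul_sub, abs_mul]
        exact mul_le_mul hfx hgx (abs_nonneg _) hF)
  have hdiff_den : |∫ x, g x ∂μ - ∫ x, g' x ∂μ| ≤ ε := by
    rw [← integral_sub hg hg']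
    simpa using norm_integral_le_of_norm_le_const (μ := μ) (f := fun x => g x - g' x) hgg'
  rw [abs_sub_comm]
  calc _ ≤ _ := abs_div_sub_div_le hI hB (abs_integral_mul_le_mul_integral hfb hg' hg'0) 1
    _ ≤ (F * ε + F * ε) / ∫ x, g x ∂μ := by
        simp only [one_mul]
        gcongr
    _ = _ := by ring

lemma integral_withDensity_div_eq_setIntegral {ν : Measure α} {S : Set α} (hS : MeasurableSet S)
    {q : α → ℝ} (hq : Measurable q) (hqpos : ∀ x ∈ S, 0 < q x) (ψ : α → ℝ) :
    ∫ x, ψ x / q x ∂(ν.restrict S).withDensity (fun x => ENNReal.ofReal (q x)) =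
      ∫ x in S, ψ x ∂ν := by
  change ∫ x, ψ x / q x ∂(ν.restrict S).withDensity (fun x => ((q x).toNNReal : ℝ≥0∞)) = _
  rw [integral_withDensity_eq_integral_smul hq.real_toNNReal]
  refine setIntegral_congr_fun hS fun x hx => ?_
  rw [NNReal.smul_def, Real.coe_toNNReal _ (hqpos x hx).le, smul_eq_mul,
    mul_div_cancel₀ _ (hqpos x hx).ne']

end Integrals

section SelfNormalized

variable {Ω α : Type*} [MeasurableSpace Ω] [MeasurableSpace α] {P : Measure Ω}
  [IsProbabilityMeasure P] {μ : Measure α} {θ : ℕ → Ω → α}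

noncomputable def selfNormalizedEstimate (θ : ℕ → Ω → α) (f w : α → ℝ) (M : ℕ) (ω : Ω) : ℝ :=
  (∑ i ∈ range M, f (θ i ω) * w (θ i ω)) / ∑ i ∈ range M, w (θ i ω)

lemma exists_ae_abs_selfNormalizedEstimate_sub_le (hθ : ∀ i, Measurable (θ i))
    (hind : iIndepFun θ P) (hlaw : ∀ i, P.map (θ i) = μ) {f w : α → ℝ} {F a υ : ℝ}
    (hf : Measurable f) (hfb : ∀ᵐ x ∂μ, |f x| ≤ F) (hF : 0 ≤ F) (hw : Measurable w)
    (hwb : ∀ᵐ x ∂μ, w x ∈ Set.Icc a⁻¹ a) (ha : 0 < a) (hυ : 0 < υ) :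
    ∃ W : Ω → ℝ, Measurable W ∧ (∀ ω, 0 < W ω) ∧ ∀ᵐ ω ∂P, ∀ M : ℕ, 0 < M →
      |selfNormalizedEstimate θ f w M ω - (∫ x, f x * w x ∂μ) / ∫ x, w x ∂μ| ≤
        W ω / (M : ℝ) ^ (1 / 2 - υ) := by
  have : IsProbabilityMeasure μ := hlaw 0 ▸ Measure.isProbabilityMeasure_map (hθ 0).aemeasurable
  have hw_int : Integrable w μ := Integrable.of_mem_Icc _ _ hw.aemeasurable hwb
  have hB := integral_pos_of_ae_le (inv_pos.mpr ha) hw_int (hwb.mono fun _ hx => hx.1)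
  have hA := abs_integral_mul_le_mul_integral hfb hw_int
    (hwb.mono fun _ hx => (inv_pos.mpr ha).le.trans hx.1)
  have hfw : Measurable fun x => f x * w x := hf.mul hw
  have hfwb : ∀ᵐ x ∂μ, f x * w x ∈ Set.Icc (-(F * a)) (F * a) :=
    (hfb.and hwb).mono fun x hx => abs_le.mp <| by
      rw [abs_mul, abs_of_nonneg ((inv_pos.mpr ha).le.trans hx.2.1)]
      exact mul_le_mul hx.1 hx.2.2 ((inv_pos.mpr ha).le.trans hx.2.1) hF
  have hρ : 1 / 2 < 1 / 2 + υ := by linarith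
  refine ⟨fun ω => a * (sumDeviationRate θ μ (fun x => f x * w x) (1 / 2 + υ) ω +
      F * sumDeviationRate θ μ w (1 / 2 + υ) ω) + 1, ?_, fun ω => ?_, ?_⟩
  · exact (((measurable_sumDeviationRate hθ hfw _).add
      ((measurable_sumDeviationRate hθ hw _).const_mul F)).const_mul a).add_const 1
  · have := sumDeviationRate_nonneg (θ := θ) (μ := μ) w (1 / 2 + υ) ω
    have := sumDeviationRate_nonneg (θ := θ) (μ := μ) (fun x => f x * w x) (1 / 2 + υ) ω
    positivity
  filter_upwards [ae_all_iff.mpr fun i => ae_of_ae_map (hθ i).aemeasurable (hlaw i ▸ hwb),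
    ae_abs_sum_sub_le_sumDeviationRate hθ hind hlaw hfw hfwb hρ,
    ae_abs_sum_sub_le_sumDeviationRate hθ hind hlaw hw hwb hρ] with ω hwω hY hZ M hM
  refine (abs_sum_mul_div_sum_sub_div_le hM ha (fun i _ => (hwω i).1) hB hA hF (hY M hM)
    (hZ M hM)).trans ?_
  rw [show 1 - (1 / 2 + υ) = 1 / 2 - υ by ring]
  gcongr
  exact le_add_of_nonneg_right zero_le_one

lemma exists_ae_abs_selfNormalizedEstimate_sub_le_of_abs_sub_le (hθ : ∀ i, Measurable (θ i))
    (hind : iIndepFun θ P) (hlaw : ∀ i, P.map (θ i) = μ) {f g w : α → ℝ} {F a ε υ : ℝ}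
    (hf : Measurable f) (hfb : ∀ᵐ x ∂μ, |f x| ≤ F) (hF : 0 ≤ F) (hg : Measurable g)
    (hgb : ∀ᵐ x ∂μ, g x ∈ Set.Icc a⁻¹ a) (hw : Measurable w)
    (hwb : ∀ᵐ x ∂μ, w x ∈ Set.Icc a⁻¹ a) (hgw : ∀ᵐ x ∂μ, |g x - w x| ≤ ε) (ha : 0 < a)
    (hυ : 0 < υ) :
    ∃ W : Ω → ℝ, Measurable W ∧ (∀ ω, 0 < W ω) ∧ ∀ᵐ ω ∂P, ∀ M : ℕ, 0 < M →
      |selfNormalizedEstimate θ f w M ω - (∫ x, f x * g x ∂μ) / ∫ x, g x ∂μ| ≤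
        W ω / (M : ℝ) ^ (1 / 2 - υ) + 2 * F / (∫ x, g x ∂μ) * ε := by
  have : IsProbabilityMeasure μ := hlaw 0 ▸ Measure.isProbabilityMeasure_map (hθ 0).aemeasurable
  have hg_int : Integrable g μ := Integrable.of_mem_Icc _ _ hg.aemeasurable hgb
  have hw_int : Integrable w μ := Integrable.of_mem_Icc _ _ hw.aemeasurable hwb
  have hbias := abs_integral_mul_div_integral_sub_le hf.aestronglyMeasurable hfb hF hg_int hw_int
    (hwb.mono fun _ hx => (inv_pos.mpr ha).le.trans hx.1)
    (integral_pos_of_ae_le (inv_pos.mpr ha) hw_int (hwb.mono fun _ hx => hx.1))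
    (integral_pos_of_ae_le (inv_pos.mpr ha) hg_int (hgb.mono fun _ hx => hx.1)) hgw
  obtain ⟨W, hW_meas, hW_pos, hW⟩ :=
    exists_ae_abs_selfNormalizedEstimate_sub_le hθ hind hlaw hf hfb hF hw hwb ha hυ
  refine ⟨W, hW_meas, hW_pos, ?_⟩
  filter_upwards [hW] with ω hω M hM
  exact (abs_sub_le _ _ _).trans (add_le_add (hω M hM) hbias)

end SelfNormalized

theorem npmc_approximate_weights_bound_general {K : ℕ} {Ω : Type*} [MeasurableSpace Ω]
    (P : Measure Ω) [IsProbabilityMeasure P]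
    (S : Set (Fin K → ℝ)) (hS : MeasurableSet S)
    (q h : (Fin K → ℝ) → ℝ)
    (hq : Measurable q) (hqpos : ∀ θ ∈ S, 0 < q θ)
    (hh : Measurable h)
    (ε : ℝ)
    (gε : (Fin K → ℝ) → ℝ) (hgε : Measurable gε)
    (hA1 : ∀ θ ∈ S, |h θ / q θ - gε θ| ≤ ε)
    (a : ℝ) (ha : 0 < a)
    (hA2 : ∀ θ ∈ S, a⁻¹ ≤ h θ / q θ ∧ h θ / q θ ≤ a)
    (hA3 : ∀ θ ∈ S, a⁻¹ ≤ gε θ ∧ gε θ ≤ a)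
    (θs : ℕ → Ω → (Fin K → ℝ)) (hθmeas : ∀ i, Measurable (θs i))
    (hindep : iIndepFun θs P)
    (hlaw : ∀ i, Measure.map (θs i) P =
      (volume.restrict S).withDensity (fun x => ENNReal.ofReal (q x)))
    (f : (Fin K → ℝ) → ℝ) (hf : Measurable f)
    (F : ℝ) (hF : 0 ≤ F) (hfb : ∀ θ ∈ S, |f θ| ≤ F)
    (υ : ℝ) (hυ0 : 0 < υ) :
    ∃ W : Ω → ℝ, Measurable W ∧ (∀ ω, 0 < W ω) ∧
      ∀ᵐ ω ∂P, ∀ M : ℕ, 1 ≤ M →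
        |(∑ i ∈ Finset.range M, f (θs i ω) * gε (θs i ω)) /
            (∑ i ∈ Finset.range M, gε (θs i ω)) -
          ∫ x in S, f x * (h x / ∫ y in S, h y)| ≤
          W ω / (M : ℝ) ^ ((1 : ℝ) / 2 - υ) + (2 * F / ∫ x in S, h x) * ε := by
  set μ := (volume.restrict S).withDensity fun x => ENNReal.ofReal (q x)
  have hSμ : ∀ᵐ x ∂μ, x ∈ S := (withDensity_absolutelyContinuous _ _).ae_le (ae_restrict_mem hS)
  obtain ⟨W, hW_meas, hW_pos, hW⟩ := exists_ae_abs_selfNormalizedEstimate_sub_le_of_abs_sub_le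
    hθmeas hindep hlaw hf (hSμ.mono hfb) hF (hh.div hq) (hSμ.mono hA2) hgε (hSμ.mono hA3)
    (hSμ.mono hA1) ha hυ0
  have hchange (ψ : (Fin K → ℝ) → ℝ) : ∫ x, ψ x / q x ∂μ = ∫ x in S, ψ x :=
    integral_withDensity_div_eq_setIntegral hS hq hqpos ψ
  have htarget : ∫ x in S, f x * (h x / ∫ y in S, h y) =
      (∫ x, f x * (h x / q x) ∂μ) / ∫ x, h x / q x ∂μ := by
    simp_rw [← mul_div_assoc, integral_div, hchange]
  refine ⟨W, hW_meas, hW_pos, ?_⟩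
  filter_upwards [hW] with ω hω M hM
  rw [htarget, ← hchange h]
  exact hω M hM

/-- Theorem 1, first inequality: under A.1, A.2, A.3, for every
bounded measurable `f` (with `|f| ≤ F` on `S`) and every `0 < υ < 1/2` there
exist a positive, almost surely finite random variable `W_{f,υ}` independent
of `M` and `ε`, and the finite constant `C = 2F/∫_S h`, such that almost
surely, for every `M ≥ 1`,
`|(f, π^{M,ε}) − (f, π)| ≤ W_{f,υ} / M^(1/2 − υ) + C ε`, where
`(f, π^{M,ε}) = Σ_i f(θ^(i)) g^ε(θ^(i)) / Σ_j g^ε(θ^(j))`, the target is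
`π = h/∫_S h`, the weight function is `g = h/q`, and the samples `θ^(i)` are
i.i.d. with common density `q` on `S`. -/
theorem npmc_approximate_weights_bound {K : ℕ} {Ω : Type*} [MeasurableSpace Ω]
    (P : Measure Ω) [IsProbabilityMeasure P]
    (S : Set (Fin K → ℝ)) (hS : MeasurableSet S)
    (q h : (Fin K → ℝ) → ℝ)
    (hq : Measurable q) (hqpos : ∀ θ ∈ S, 0 < q θ)
    (hq1 : (∫ θ in S, q θ) = 1)
    (hh : Measurable h) (hhpos : ∀ θ ∈ S, 0 < h θ)
    (hhint : IntegrableOn h S) (hhI : 0 < ∫ θ in S, h θ)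
    (ε : ℝ) (hε : 0 ≤ ε)
    (gε : (Fin K → ℝ) → ℝ) (hgε : Measurable gε)
    (hA1 : ∀ θ ∈ S, |h θ / q θ - gε θ| ≤ ε)
    (a : ℝ) (ha : 0 < a)
    (hA2 : ∀ θ ∈ S, a⁻¹ ≤ h θ / q θ ∧ h θ / q θ ≤ a)
    (hA3 : ∀ θ ∈ S, a⁻¹ ≤ gε θ ∧ gε θ ≤ a)
    (θs : ℕ → Ω → (Fin K → ℝ)) (hθmeas : ∀ i, Measurable (θs i))
    (hindep : iIndepFun θs P)
    (hlaw : ∀ i, Measure.map (θs i) P =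
      (volume.restrict S).withDensity (fun x => ENNReal.ofReal (q x)))
    (f : (Fin K → ℝ) → ℝ) (hf : Measurable f)
    (F : ℝ) (hF : 0 ≤ F) (hfb : ∀ θ ∈ S, |f θ| ≤ F)
    (υ : ℝ) (hυ0 : 0 < υ) (hυ : υ < 1 / 2) :
    ∃ W : Ω → ℝ, Measurable W ∧ (∀ ω, 0 < W ω) ∧
      ∀ᵐ ω ∂P, ∀ M : ℕ, 1 ≤ M →
        |(∑ i ∈ Finset.range M, f (θs i ω) * gε (θs i ω)) /
            (∑ i ∈ Finset.range M, gε (θs i ω)) -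
          ∫ x in S, f x * (h x / ∫ y in S, h y)| ≤
          W ω / (M : ℝ) ^ ((1 : ℝ) / 2 - υ) + (2 * F / ∫ x in S, h x) * ε :=
  npmc_approximate_weights_bound_general P S hS q h hq hqpos hh ε gε hgε hA1 a ha hA2 hA3 θs hθmeas
    hindep hlaw f hf F hF hfb υ hυ0
end

section
/- If ‖f‖_∞ < ∞ and the estimator satisfies |(f, π^{M,ε})| ≤ ‖f‖_∞ (which holds when g^ε ≥ 0), then |(f, π^{M,ε}) − (f, π)| ≤ (1/(1,h)) | (fg^ε, q^M) − (fg, q) | + (‖f‖_∞/(1,h)) | (g, q) − (g^ε, q^M) |, where (1, h) = ∫_S h(θ) dθ. -/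
open MeasureTheory

/-- if `‖f‖_∞ ≤ F` and the self-normalized estimator satisfies
`|(f, π^{M,ε})| ≤ F` (which holds when `g^ε ≥ 0`), then
`|(f, π^{M,ε}) − (f, π)| ≤ (1/(1,h)) |(fg^ε, q^M) − (fg, q)|
   + (F/(1,h)) |(g, q) − (g^ε, q^M)|`, where `(1, h) = ∫_S h`. -/
theorem estimator_error_bound {K : ℕ}
    (S : Set (Fin K → ℝ)) (hS : MeasurableSet S)
    (q h gε f : (Fin K → ℝ) → ℝ)
    (hq : Measurable q) (hqpos : ∀ θ ∈ S, 0 < q θ)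
    (hq1 : (∫ θ in S, q θ) = 1)
    (hh : Measurable h) (hhpos : ∀ θ ∈ S, 0 < h θ)
    (hhint : IntegrableOn h S) (hhI : 0 < ∫ θ in S, h θ)
    (hgε : Measurable gε) (hgεnn : ∀ θ ∈ S, 0 ≤ gε θ)
    (M : ℕ) (θs : Fin M → (Fin K → ℝ)) (hθs : ∀ i, θs i ∈ S)
    (hden : 0 < (M : ℝ)⁻¹ * ∑ i, gε (θs i))
    (hf : Measurable f) (F : ℝ) (hfb : ∀ θ ∈ S, |f θ| ≤ F)
    (hest : |((M : ℝ)⁻¹ * ∑ i, f (θs i) * gε (θs i)) /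
        ((M : ℝ)⁻¹ * ∑ i, gε (θs i))| ≤ F) :
    |((M : ℝ)⁻¹ * ∑ i, f (θs i) * gε (θs i)) / ((M : ℝ)⁻¹ * ∑ i, gε (θs i)) -
        (∫ x in S, f x * (h x / q x) * q x) / (∫ x in S, (h x / q x) * q x)| ≤
      (∫ x in S, h x)⁻¹ *
          |((M : ℝ)⁻¹ * ∑ i, f (θs i) * gε (θs i)) - ∫ x in S, f x * (h x / q x) * q x| +
        (F / ∫ x in S, h x) *
          |(∫ x in S, (h x / q x) * q x) - (M : ℝ)⁻¹ * ∑ i, gε (θs i)| := by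
  have hb : (∫ x in S, (h x / q x) * q x) = ∫ x in S, h x := by
    refine setIntegral_congr_fun hS (fun x hx => ?_)
    field_simp [ne_of_gt (hqpos x hx)]
  set A := ((M : ℝ)⁻¹ * ∑ i, f (θs i) * gε (θs i)) with hA
  set B := ((M : ℝ)⁻¹ * ∑ i, gε (θs i)) with hB
  set a := (∫ x in S, f x * (h x / q x) * q x) with ha
  set I := (∫ x in S, h x) with hI
  rw [hb]
  have hBne : B ≠ 0 := ne_of_gt hden
  have hIne : I ≠ 0 := ne_of_gt hhI
  have key : A / B - a / I = (A - a) / I + (A / B) * ((I - B) / I) := by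
    field_simp
    ring
  calc |A / B - a / I| = |(A - a) / I + (A / B) * ((I - B) / I)| := by rw [key]
    _ ≤ |(A - a) / I| + |(A / B) * ((I - B) / I)| := abs_add_le _ _
    _ = I⁻¹ * |A - a| + |A / B| * (|I - B| / I) := by
        rw [abs_div (A - a) I, abs_mul, abs_div (I - B) I, abs_of_pos hhI]
        ring
    _ ≤ I⁻¹ * |A - a| + F * (|I - B| / I) := by
        gcongr
    _ = I⁻¹ * |A - a| + (F / I) * |I - B| := by ring
end

section
/- Let v_1, …, v_M and w_1, …, w_M be real numbers with v_i ≥ a^{−1} for all i and w_i ≥ 0 with Σ_j w_j > 0, and let f_1, …, f_M satisfy |f_i| ≤ F. Then | Σ_i f_i v_i / Σ_j v_j − Σ_i f_i w_i / Σ_j w_j | ≤ a · | (1/M) Σ_i f_i (v_i − w_i) | + a F · | (1/M) Σ_i (v_i − w_i) |. -/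
/-!
Writing `A = Σ fᵢvᵢ`, `B = Σ fᵢwᵢ`, `V = Σ vⱼ`, `W = Σ wⱼ`, one has
`A/V - B/W = (A - B)/V - (B/W) · (V - W)/V`. The self-normalized average `B/W` is a convex
combination of the `fᵢ`, so `|B/W| ≤ F`, and `V ≥ M/a` turns division by `V` into
multiplication by `a/M`.
-/

open Finset

theorem div_sub_div_eq_sub_div_sub_mul_div {K : Type*} [Field K] {a b x y : K}
    (hx : x ≠ 0) (hy : y ≠ 0) :
    a / x - b / y = (a - b) / x - b / y * ((x - y) / x) := by
  field_simp
  ring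

theorem abs_div_sub_div_le_of_le {a b x y c F : ℝ} (hc : 0 < c) (hcx : c ≤ x) (hy : 0 < y)
    (hb : |b| ≤ F * y) :
    |a / x - b / y| ≤ |a - b| / c + F * (|x - y| / c) := by
  have hx : 0 < x := hc.trans_le hcx
  have habs_div (t : ℝ) : |t / x| ≤ |t| / c := by
    rw [abs_div, abs_of_pos hx]
    exact div_le_div_of_nonneg_left (abs_nonneg t) hc hcx
  have hby : |b / y| ≤ F := by
    rwa [abs_div, abs_of_pos hy, div_le_iff₀ hy]
  rw [div_sub_div_eq_sub_div_sub_mul_div hx.ne' hy.ne']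
  calc |(a - b) / x - b / y * ((x - y) / x)|
      ≤ |(a - b) / x| + |b / y| * |(x - y) / x| := by
        rw [← abs_mul]
        exact abs_sub _ _
    _ ≤ |a - b| / c + F * (|x - y| / c) := by
        have hF : 0 ≤ F := (abs_nonneg _).trans hby
        exact add_le_add (habs_div _) (mul_le_mul hby (habs_div _) (abs_nonneg _) hF)

theorem abs_sum_mul_le_mul_sum {ι : Type*} (s : Finset ι) {f w : ι → ℝ} {F : ℝ}
    (hw : ∀ i ∈ s, 0 ≤ w i) (hf : ∀ i ∈ s, |f i| ≤ F) :
    |∑ i ∈ s, f i * w i| ≤ F * ∑ i ∈ s, w i := by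
  rw [mul_sum]
  refine (abs_sum_le_sum_abs _ _).trans (sum_le_sum fun i hi => ?_)
  rw [abs_mul, abs_of_nonneg (hw i hi)]
  exact mul_le_mul_of_nonneg_right (hf i hi) (hw i hi)

/-- deterministic perturbation bound for self-normalized weighted
averages.  If `v_i ≥ a⁻¹`, `w_i ≥ 0` with `Σ_j w_j > 0`, and `|f_i| ≤ F`, then
`|Σ f_i v_i / Σ v_j − Σ f_i w_i / Σ w_j|
   ≤ a |(1/M) Σ f_i (v_i − w_i)| + a F |(1/M) Σ (v_i − w_i)|`. -/
theorem self_normalized_perturbation_bound (M : ℕ) (a F : ℝ) (ha : 0 < a)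
    (v w f : Fin M → ℝ)
    (hv : ∀ i, a⁻¹ ≤ v i)
    (hw : ∀ i, 0 ≤ w i)
    (hwsum : 0 < ∑ j, w j)
    (hf : ∀ i, |f i| ≤ F) :
    |(∑ i, f i * v i) / (∑ j, v j) - (∑ i, f i * w i) / (∑ j, w j)| ≤
      a * |(M : ℝ)⁻¹ * ∑ i, f i * (v i - w i)| +
        a * F * |(M : ℝ)⁻¹ * ∑ i, (v i - w i)| := by
  have hM : 0 < M := Nat.pos_of_ne_zero fun h => by subst h; simp at hwsum
  have hc : 0 < (M : ℝ) * a⁻¹ := by positivity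
  have hcv : (M : ℝ) * a⁻¹ ≤ ∑ j, v j := by
    simpa using card_nsmul_le_sum univ v a⁻¹ fun i _ => hv i
  have hscale (t : ℝ) : |t| / ((M : ℝ) * a⁻¹) = a * |(M : ℝ)⁻¹ * t| := by
    rw [abs_mul, abs_of_pos (by positivity : (0 : ℝ) < (M : ℝ)⁻¹)]
    field_simp
  have hbound := abs_div_sub_div_le_of_le (a := ∑ i, f i * v i) hc hcv hwsum
    (abs_sum_mul_le_mul_sum univ (fun i _ => hw i) fun i _ => hf i)
  rw [hscale, hscale] at hbound
  simp only [mul_sub, sum_sub_distrib] at hbound ⊢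
  linarith
end
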